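/- Let G be a prime {P5, P5-bar}-free graph, let v be an antisimplicial vertex of G, and choose u non-adjacent to v minimizing |N(u) ∩ N(v)|. Then u is a simplicial vertex. -/

import Mathlib

/-!
Every non-neighbour of the antisimplicial vertex `v` has its neighbourhood inside `N(v)`.
If `u` were not simplicial, the anticomponent `Z` of `N(u)` containing a non-edge would be a
set of at least two vertices, so primeness gives a vertex `x ∉ Z` mixed on `Z`, and then `x`
has a neighbour `p` and a non-neighbour `q` with `p, q ∈ N(u)` non-adjacent. Such an `x` is not in
`N(u)`, since `Z` is closed under non-adjacency inside `N(u)`; it is not in `N(v) ∖ N(u)`,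
since `p, q, x, u, v` would induce a `P5`-complement. So `x` is a non-neighbour of `v`, and
then `P5`- and `P5`-complement-freeness force `N(x) ⊆ N(u)`; as `q ∈ N(u) ∖ N(x)`, this
contradicts the choice of `u`.
-/

open SimpleGraph

variable {V : Type*} {W : Type*}

/-- A vertex `v` is *mixed* on a set `X` if it has both a neighbor and a non-neighbor in `X`. -/
def Mixed (G : SimpleGraph V) (v : V) (X : Set V) : Prop :=
  (∃ x ∈ X, G.Adj v x) ∧ (∃ x ∈ X, ¬ G.Adj v x)

/-- A homogeneous set: `1 < |X| < |V(G)|` and no outside vertex is mixed on `X`. -/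
def IsHomogeneousSet [Fintype V] (G : SimpleGraph V) (X : Set V) : Prop :=
  1 < X.ncard ∧ X.ncard < Fintype.card V ∧ ∀ v ∉ X, ¬ Mixed G v X

/-- A graph is prime if it has at least four vertices and no homogeneous set. -/
def IsPrimeGraph [Fintype V] (G : SimpleGraph V) : Prop :=
  4 ≤ Fintype.card V ∧ ∀ X : Set V, ¬ IsHomogeneousSet G X

/-- A vertex is simplicial if its neighborhood is a clique. -/
def Simplicial (G : SimpleGraph V) (v : V) : Prop :=
  G.IsClique (G.neighborSet v)

/-- A vertex is antisimplicial if its non-neighborhood is a stable set. -/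
def Antisimplicial (G : SimpleGraph V) (v : V) : Prop :=
  Gᶜ.IsClique {u | ¬ G.Adj v u}

/-- `G` is `H`-free: there is no induced copy of `H` in `G`. -/
def HFree (H : SimpleGraph W) (G : SimpleGraph V) : Prop :=
  ¬ Nonempty (H ↪g G)

lemma pathGraph_five_isIndContained {G : SimpleGraph V} {a b c d e : V}
    (hab : G.Adj a b) (hbc : G.Adj b c) (hcd : G.Adj c d) (hde : G.Adj d e)
    (hac : ¬G.Adj a c) (had : ¬G.Adj a d) (hae : ¬G.Adj a e)
    (hbd : ¬G.Adj b d) (hbe : ¬G.Adj b e) (hce : ¬G.Adj c e) :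
    pathGraph 5 ⊴ G := by
  have := hab.ne; have := hbc.ne; have := hcd.ne; have := hde.ne
  have : a ≠ c := by rintro rfl; exact had hcd
  have : a ≠ d := by rintro rfl; exact hac hcd.symm
  have : a ≠ e := by rintro rfl; exact had hde.symm
  have : b ≠ d := by rintro rfl; exact had hab
  have : b ≠ e := by rintro rfl; exact hbd hde.symm
  have : c ≠ e := by rintro rfl; exact hbe hbc
  refine ⟨⟨⟨![a, b, c, d, e], ?_⟩, ?_⟩⟩
  · intro i j hij
    fin_cases i <;> fin_cases j <;> simp_all [eq_comm]
  · intro i j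
    change G.Adj (![a, b, c, d, e] i) (![a, b, c, d, e] j) ↔ _
    fin_cases i <;> fin_cases j <;> simp_all [pathGraph_adj, adj_comm]

lemma compl_pathGraph_five_isIndContained {G : SimpleGraph V} {a b c d e : V}
    (hab : ¬G.Adj a b) (hbc : ¬G.Adj b c) (hcd : ¬G.Adj c d) (hde : ¬G.Adj d e)
    (hac : G.Adj a c) (had : G.Adj a d) (hae : G.Adj a e)
    (hbd : G.Adj b d) (hbe : G.Adj b e) (hce : G.Adj c e) :
    (pathGraph 5)ᶜ ⊴ G := by
  have hP5 : pathGraph 5 ⊴ Gᶜ := by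
    refine pathGraph_five_isIndContained ?_ ?_ ?_ ?_ (·.2 hac) (·.2 had) (·.2 hae)
      (·.2 hbd) (·.2 hbe) (·.2 hce) <;> rw [compl_adj]
    · exact ⟨by rintro rfl; exact hbc hac, hab⟩
    · exact ⟨by rintro rfl; exact hcd hbd, hbc⟩
    · exact ⟨by rintro rfl; exact hde hce, hcd⟩
    · exact ⟨by rintro rfl; exact hcd hce, hde⟩
  simpa using hP5.compl

namespace SimpleGraph

/-- For `a ∈ S`, the vertex set of the component of `a` in the complement of `G[S]`. -/
def anticomponent (G : SimpleGraph V) (S : Set V) (a : V) : Set V :=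
  {z | Relation.ReflTransGen (fun p q => p ∈ S ∧ q ∈ S ∧ ¬G.Adj p q) a z}

variable {G : SimpleGraph V} {S : Set V} {a x y z : V}

lemma self_mem_anticomponent : a ∈ G.anticomponent S a :=
  Relation.ReflTransGen.refl

lemma anticomponent_subset (ha : a ∈ S) : G.anticomponent S a ⊆ S := fun z hz => by
  rcases Relation.ReflTransGen.cases_tail hz with rfl | ⟨_, _, _, hzS, _⟩
  exacts [ha, hzS]

lemma mem_anticomponent_of_not_adj (ha : a ∈ S) (hz : z ∈ G.anticomponent S a) (hy : y ∈ S)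
    (hzy : ¬G.Adj z y) : y ∈ G.anticomponent S a :=
  Relation.ReflTransGen.tail hz ⟨anticomponent_subset ha hz, hy, hzy⟩

lemma exists_not_adj_of_mixed_anticomponent (hmix : Mixed G x (G.anticomponent S a)) :
    ∃ p ∈ S, ∃ q ∈ S, ¬G.Adj p q ∧ G.Adj x p ∧ ¬G.Adj x q := by
  by_contra! h
  have hconst : ∀ z ∈ G.anticomponent S a, G.Adj x a ↔ G.Adj x z := by
    intro z hz
    induction hz with
    | refl => rfl
    | tail _ hpq ih =>
      obtain ⟨hp, hq, hpq⟩ := hpq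
      exact ih.trans ⟨h _ hp _ hq hpq, h _ hq _ hp (hpq ∘ Adj.symm)⟩
  obtain ⟨⟨z, hz, hxz⟩, ⟨z', hz', hxz'⟩⟩ := hmix
  exact hxz' ((hconst z' hz').1 ((hconst z hz).2 hxz))

end SimpleGraph

lemma IsPrimeGraph.exists_mixed [Fintype V] {G : SimpleGraph V} (hG : IsPrimeGraph G)
    {X : Set V} (hX : 1 < X.ncard) {y : V} (hy : y ∉ X) : ∃ x ∉ X, Mixed G x X := by
  by_contra! h
  have hXV : X.ncard < Fintype.card V :=
    Nat.card_eq_fintype_card (α := V) ▸ Set.ncard_lt_card fun hX => hy (hX ▸ Set.mem_univ y)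
  exact hG.2 X ⟨hX, hXV, h⟩

section Antisimplicial

variable {G : SimpleGraph V} {u v x y : V}

lemma Antisimplicial.not_adj (hv : Antisimplicial G v) (hx : ¬G.Adj v x) (hy : ¬G.Adj v y)
    (hxy : x ≠ y) : ¬G.Adj x y :=
  (hv hx hy hxy).2

lemma Antisimplicial.adj_of_adj (hv : Antisimplicial G v) (hx : ¬G.Adj v x)
    (hxy : G.Adj x y) : G.Adj v y := by
  by_contra hy
  exact hv.not_adj hx hy hxy.ne hxy

end Antisimplicial

section PathFree

variable {G : SimpleGraph V} {u v w x p q : V}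

/-- Otherwise `p-q-w-u-v` is an induced path in the complement. -/
lemma HFree.adj_of_adj_of_compl_pathGraph_five (hP5c : HFree (pathGraph 5)ᶜ G)
    (huv : ¬G.Adj u v) (hvw : G.Adj v w) (huw : ¬G.Adj u w) (hup : G.Adj u p) (huq : G.Adj u q)
    (hvp : G.Adj v p) (hvq : G.Adj v q) (hpq : ¬G.Adj p q) (hwp : G.Adj w p) : G.Adj w q := by
  by_contra hwq
  exact hP5c <| compl_pathGraph_five_isIndContained hpq (hwq ∘ Adj.symm) (huw ∘ Adj.symm) huv
    hwp.symm hup.symm hvp.symm huq.symm hvq.symm hvw.symm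

lemma Antisimplicial.neighborSet_subset_of_adj_of_not_adj (hP5 : HFree (pathGraph 5) G)
    (hP5c : HFree (pathGraph 5)ᶜ G) (hv : Antisimplicial G v) (huv : ¬G.Adj u v)
    (hvx : ¬G.Adj v x) (hup : G.Adj u p) (huq : G.Adj u q) (hpq : ¬G.Adj p q)
    (hxp : G.Adj x p) (hxq : ¬G.Adj x q) : G.neighborSet x ⊆ G.neighborSet u := by
  have hvu : ¬G.Adj v u := huv ∘ Adj.symm
  have hxu : ¬G.Adj x u := hv.not_adj hvx hvu (by rintro rfl; exact hxq huq)
  have hvp := hv.adj_of_adj hvu hup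
  have hvq := hv.adj_of_adj hvu huq
  intro y (hxy : G.Adj x y)
  by_contra huy
  -- `y` sees both or none of `p, q`; then `p-q-x-u-y` is a path in the complement,
  -- resp. `y-x-p-u-q` is an induced path.
  have hvy := hv.adj_of_adj hvx hxy
  by_cases hyp : G.Adj y p
  · have hyq := hP5c.adj_of_adj_of_compl_pathGraph_five huv hvy huy hup huq hvp hvq hpq hyp
    exact hP5c <| compl_pathGraph_five_isIndContained hpq (hxq ∘ Adj.symm) hxu huy
      hxp.symm hup.symm hyp.symm huq.symm hyq.symm hxy
  · have hyq : ¬G.Adj y q := fun hyq => hyp <|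
      hP5c.adj_of_adj_of_compl_pathGraph_five huv hvy huy huq hup hvq hvp (hpq ∘ Adj.symm) hyq
    exact hP5 <| pathGraph_five_isIndContained hxy.symm hxp hup.symm huq hyp (huy ∘ Adj.symm)
      hyq hxu hxq hpq

end PathFree

theorem stmt9_general [Fintype V] (G : SimpleGraph V) (hprime : IsPrimeGraph G)
    (hfree1 : HFree (pathGraph 5) G) (hfree2 : HFree ((pathGraph 5)ᶜ) G)
    (v : V) (hv : Antisimplicial G v)
    (u : V) (hnadj : ¬ G.Adj u v)
    (hmin : ∀ u', u' ≠ v → ¬ G.Adj u' v →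
      (G.neighborSet u ∩ G.neighborSet v).ncard ≤ (G.neighborSet u' ∩ G.neighborSet v).ncard) :
    Simplicial G u := by
  by_contra hns
  obtain ⟨a, ha, b, hb, hab, hnab⟩ :
      ∃ a ∈ G.neighborSet u, ∃ b ∈ G.neighborSet u, a ≠ b ∧ ¬G.Adj a b := by
    simpa [Simplicial, isClique_iff, Set.Pairwise] using hns
  set Z := G.anticomponent (G.neighborSet u) a
  have hbZ : b ∈ Z := mem_anticomponent_of_not_adj ha self_mem_anticomponent hb hnab
  obtain ⟨x, hxZ, hmix⟩ := hprime.exists_mixed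
    ((Set.one_lt_ncard (Set.toFinite Z)).2 ⟨a, self_mem_anticomponent, b, hbZ, hab⟩)
    (fun hu => G.irrefl (anticomponent_subset ha hu))
  by_cases hux : G.Adj u x
  · obtain ⟨z, hz, hxz⟩ := hmix.2
    exact hxZ (mem_anticomponent_of_not_adj ha hz hux (hxz ∘ Adj.symm))
  obtain ⟨p, hp, q, hq, hpq, hxp, hxq⟩ := exists_not_adj_of_mixed_anticomponent hmix
  have hvp := hv.adj_of_adj (hnadj ∘ Adj.symm) hp
  have hvq := hv.adj_of_adj (hnadj ∘ Adj.symm) hq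
  by_cases hvx : G.Adj v x
  · exact hxq (hfree2.adj_of_adj_of_compl_pathGraph_five hnadj hvx hux hp hq hvp hvq hpq hxp)
  have hxu := hv.neighborSet_subset_of_adj_of_not_adj hfree1 hfree2 hnadj hvx hp hq hpq hxp hxq
  have hlt :
      (G.neighborSet x ∩ G.neighborSet v).ncard < (G.neighborSet u ∩ G.neighborSet v).ncard :=
    Set.ncard_lt_ncard ((Set.ssubset_iff_of_subset (Set.inter_subset_inter_left _ hxu)).2
      ⟨q, ⟨hq, hvq⟩, fun h => hxq h.1⟩)
  exact (hmin x (by rintro rfl; exact hxq hvq) (hvx ∘ Adj.symm)).not_gt hlt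

theorem stmt9 [Fintype V] (G : SimpleGraph V) (hprime : IsPrimeGraph G)
    (hfree1 : HFree (pathGraph 5) G) (hfree2 : HFree ((pathGraph 5)ᶜ) G)
    (v : V) (hv : Antisimplicial G v)
    (u : V) (huv : u ≠ v) (hnadj : ¬ G.Adj u v)
    (hmin : ∀ u', u' ≠ v → ¬ G.Adj u' v →
      (G.neighborSet u ∩ G.neighborSet v).ncard ≤ (G.neighborSet u' ∩ G.neighborSet v).ncard) :
    Simplicial G u :=
  stmt9_general G hprime hfree1 hfree2 v hv u hnadj hmin
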